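/- arXiv:1901.08584 — 2 statements merged into one kernel-verified Lean document; each statement's English description precedes it below -/
import Mathlib

section
/- For symmetric positive semidefinite matrices A, B ∈ R^{n×n} with B ⪰ A and B invertible, we have P_A B^{-1} P_A ⪯ A^†, where A^† is the Moore–Penrose pseudoinverse and P_A = A^{1/2} A^† A^{1/2} is the orthogonal projection onto the column space of A. -/
/-!
The block matrix `[[B, P], [P, A†]]` with `P = A A†` is positive semidefinite: it is the sum of
`[[B - A, 0], [0, 0]]` and the Gram matrix of the block row `[A^{1/2}, A^{1/2} A†]`. Its Schur
complement with respect to `B` is `A† - P B⁻¹ P`. Finally `A^{1/2} A† A^{1/2} = A A†`, because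
`A^{1/2}` commutes with `A`, and anything commuting with a self-adjoint element commutes with its
Moore–Penrose inverse.
-/

open Matrix

/-- The PSD square root as defined in the older Mathlib (`Matrix.PosSemidef.sqrt`, removed since). -/
noncomputable def Matrix.PosSemidef.sqrt {n : Type*} {𝕜 : Type*} [Fintype n] [RCLike 𝕜] [PartialOrder 𝕜]
    [DecidableEq n] {A : Matrix n n 𝕜} (hA : A.PosSemidef) : Matrix n n 𝕜 :=
  hA.1.eigenvectorUnitary.1 * diagonal ((↑) ∘ (√·) ∘ hA.1.eigenvalues) *
    (star hA.1.eigenvectorUnitary : Matrix n n 𝕜)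

section MoorePenrose

variable {R : Type*} [Semigroup R] [StarMul R]

structure IsMoorePenroseInverse (a x : R) : Prop where
  mul_inv_mul : a * x * a = a
  inv_mul_inv : x * a * x = x
  isSelfAdjoint_mul_inv : IsSelfAdjoint (a * x)
  isSelfAdjoint_inv_mul : IsSelfAdjoint (x * a)

namespace IsMoorePenroseInverse

variable {a b x y : R}

protected theorem star (h : IsMoorePenroseInverse a x) :
    IsMoorePenroseInverse (star a) (star x) where
  mul_inv_mul := by rw [← star_mul, ← star_mul, ← mul_assoc, h.mul_inv_mul]
  inv_mul_inv := by rw [← star_mul, ← star_mul, ← mul_assoc, h.inv_mul_inv]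
  isSelfAdjoint_mul_inv := by
    rw [← star_mul]; exact IsSelfAdjoint.star_iff.mpr h.isSelfAdjoint_inv_mul
  isSelfAdjoint_inv_mul := by
    rw [← star_mul]; exact IsSelfAdjoint.star_iff.mpr h.isSelfAdjoint_mul_inv

theorem unique (hx : IsMoorePenroseInverse a x) (hy : IsMoorePenroseInverse a y) : x = y := by
  have hax := hx.isSelfAdjoint_mul_inv.star_eq
  have hay := hy.isSelfAdjoint_mul_inv.star_eq
  have hxa := hx.isSelfAdjoint_inv_mul.star_eq
  have hya := hy.isSelfAdjoint_inv_mul.star_eq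
  rw [star_mul] at hax hay hxa hya
  calc x = x * (star x * star a) := by rw [hax, ← mul_assoc, hx.inv_mul_inv]
    _ = x * (star x * (star a * (star y * star a))) := by
      rw [← mul_assoc (star a), hy.star.mul_inv_mul]
    _ = x * a * y := by
      rw [hay, ← mul_assoc (star x), hax, ← mul_assoc x, ← mul_assoc x a x, hx.inv_mul_inv,
        ← mul_assoc]
    _ = (star a * star x) * (star a * (star y * y)) := by
      rw [hxa, ← mul_assoc (star a), hya, hy.inv_mul_inv]
    _ = y := by rw [← mul_assoc, hx.star.mul_inv_mul, ← mul_assoc, hya, hy.inv_mul_inv]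

theorem isSelfAdjoint (ha : IsSelfAdjoint a) (h : IsMoorePenroseInverse a x) :
    IsSelfAdjoint x :=
  (ha.star_eq ▸ h.star).unique h

theorem commute (ha : IsSelfAdjoint a) (h : IsMoorePenroseInverse a x) : Commute a x := by
  rw [Commute, SemiconjBy, ← h.isSelfAdjoint_mul_inv.star_eq, star_mul, ha.star_eq,
    (h.isSelfAdjoint ha).star_eq]

theorem commute_of_commute (ha : IsSelfAdjoint a) (h : IsMoorePenroseInverse a x)
    (hb : Commute a b) : Commute x b := by
  have haxa := h.mul_inv_mul
  have hxax := h.inv_mul_inv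
  have hax : a * x = x * a := h.commute ha
  have hab : a * b = b * a := hb
  -- the idempotent `a * x` commutes with `b`: both products equal `(a * x) * b * (a * x)`
  have hpb : a * x * b = b * (a * x) := calc
    a * x * b = a * x * b * (a * x) := by grind [mul_assoc]
    _ = b * (a * x) := by grind [mul_assoc]
  calc x * b = x * (a * x * b) := by grind [mul_assoc]
    _ = x * (b * (a * x)) := by rw [hpb]
    _ = a * x * b * x := by grind [mul_assoc]
    _ = b * x := by rw [hpb]; grind [mul_assoc]

end IsMoorePenroseInverse

end MoorePenrose

namespace Matrix

open scoped ComplexOrder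

variable {m n 𝕜 : Type*} [Fintype m] [Fintype n] [DecidableEq n] [RCLike 𝕜]

theorem posSemidef_fromBlocks_conjTranspose_mul (X : Matrix m m 𝕜) (Y : Matrix m n 𝕜) :
    (fromBlocks (Xᴴ * X) (Xᴴ * Y) (Yᴴ * X) (Yᴴ * Y)).PosSemidef := by
  simpa [fromBlocks_conjTranspose, fromBlocks_multiply] using
    posSemidef_conjTranspose_mul_self (fromBlocks X Y (0 : Matrix n m 𝕜) (0 : Matrix n n 𝕜))

namespace PosSemidef

variable {A B Ad : Matrix n n 𝕜}

theorem sqrt_mul_sqrt (hA : A.PosSemidef) : hA.sqrt * hA.sqrt = A := by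
  set U : Matrix n n 𝕜 := hA.1.eigenvectorUnitary.1
  have hU : star U * U = 1 := Unitary.coe_star_mul_self _
  conv_rhs => rw [hA.1.spectral_theorem, Unitary.conjStarAlgAut_apply]
  calc hA.sqrt * hA.sqrt
      = U * diagonal ((↑) ∘ (√·) ∘ hA.1.eigenvalues) * (star U * U) *
          diagonal ((↑) ∘ (√·) ∘ hA.1.eigenvalues) * star U := by
        simp only [sqrt, Matrix.mul_assoc]; rfl
    _ = _ := by
      rw [hU, Matrix.mul_one, Matrix.mul_assoc U, diagonal_mul_diagonal]
      congr 3
      funext i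
      simp [← RCLike.ofReal_mul, Real.mul_self_sqrt (hA.eigenvalues_nonneg i)]

theorem isHermitian_sqrt (hA : A.PosSemidef) : hA.sqrt.IsHermitian :=
  isHermitian_mul_mul_conjTranspose _ (isHermitian_diagonal_of_self_adjoint _ (by ext i; simp))

theorem sqrt_mul_mul_sqrt (hA : A.PosSemidef) (h : IsMoorePenroseInverse A Ad) :
    hA.sqrt * Ad * hA.sqrt = A * Ad := by
  have hS : Commute A hA.sqrt := by
    nth_rewrite 1 [← hA.sqrt_mul_sqrt]
    exact (Commute.refl _).mul_left (Commute.refl _)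
  rw [Matrix.mul_assoc, (h.commute_of_commute hA.isHermitian hS).eq, ← Matrix.mul_assoc,
    hA.sqrt_mul_sqrt]

theorem fromBlocks_mul_moorePenrose (hA : A.PosSemidef) (hBA : (B - A).PosSemidef)
    (h : IsMoorePenroseInverse A Ad) : (fromBlocks B (A * Ad) (A * Ad)ᴴ Ad).PosSemidef := by
  set S := hA.sqrt
  set R := hBA.sqrt
  have hSS : Sᴴ * S = A := by rw [hA.isHermitian_sqrt.eq, hA.sqrt_mul_sqrt]
  have hRR : Rᴴ * R = B - A := by rw [hBA.isHermitian_sqrt.eq, hBA.sqrt_mul_sqrt]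
  have hAd : Adᴴ = Ad := h.isSelfAdjoint hA.isHermitian
  have hsplit : fromBlocks B (A * Ad) (A * Ad)ᴴ Ad =
      fromBlocks (Rᴴ * R) (Rᴴ * 0) (0ᴴ * R) (0ᴴ * 0) +
        fromBlocks (Sᴴ * S) (Sᴴ * (S * Ad)) ((S * Ad)ᴴ * S) ((S * Ad)ᴴ * (S * Ad)) := by
    simp only [fromBlocks_add, conjTranspose_mul, conjTranspose_zero, hAd, hA.isHermitian.eq,
      Matrix.mul_assoc, ← Matrix.mul_assoc Sᴴ, hSS, hRR, Matrix.mul_zero, Matrix.zero_mul,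
      zero_add, sub_add_cancel]
    rw [← Matrix.mul_assoc Ad, h.inv_mul_inv]
  rw [hsplit]
  exact (posSemidef_fromBlocks_conjTranspose_mul _ _).add
    (posSemidef_fromBlocks_conjTranspose_mul _ _)

theorem moorePenrose_sub_mul_inv_mul (hA : A.PosSemidef) (hB : B.PosDef)
    (hBA : (B - A).PosSemidef) (h : IsMoorePenroseInverse A Ad) :
    (Ad - A * Ad * B⁻¹ * (A * Ad)).PosSemidef := by
  have : Invertible B := hB.isUnit.invertible
  have hP : (A * Ad)ᴴ = A * Ad := h.isSelfAdjoint_mul_inv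
  simpa only [hP] using
    (PosDef.fromBlocks₁₁ (A * Ad) Ad hB).mp (hA.fromBlocks_mul_moorePenrose hBA h)

end PosSemidef

end Matrix

/-- For symmetric PSD matrices `A, B` with `B ⪰ A` and `B` invertible,
`P_A B⁻¹ P_A ⪯ A†` where `A†` (here `Ad`, characterized by the four Moore–Penrose
conditions) is the pseudoinverse and `P_A = A^{1/2} A† A^{1/2}`. -/
theorem stmt_1 (n : ℕ) (A B Ad : Matrix (Fin n) (Fin n) ℝ)
    (hA : A.PosSemidef) (hB : B.PosSemidef) (hBA : (B - A).PosSemidef)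
    (hBinv : IsUnit B.det)
    (h1 : A * Ad * A = A) (h2 : Ad * A * Ad = Ad)
    (h3 : (A * Ad)ᵀ = A * Ad) (h4 : (Ad * A)ᵀ = Ad * A) :
    (Ad - (hA.sqrt * Ad * hA.sqrt) * B⁻¹ * (hA.sqrt * Ad * hA.sqrt)).PosSemidef := by
  have hAd : IsMoorePenroseInverse A Ad :=
    ⟨h1, h2, (conjTranspose_eq_transpose_of_trivial _).trans h3,
      (conjTranspose_eq_transpose_of_trivial _).trans h4⟩
  have hBpd : B.PosDef := hB.posDef_iff_isUnit.mpr ((isUnit_iff_isUnit_det B).mpr hBinv)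
  rw [hA.sqrt_mul_mul_sqrt hAd]
  exact hA.moorePenrose_sub_mul_inv_mul hBpd hBA hAd
end

section
/- Let x₁,…,xₙ be unit vectors in R^d with Gram matrix K, and let H^∞_{ij} = K_{ij}(π − arccos(K_{ij}))/(2π). Then H^∞ ⪰ K/4 and for every positive integer l, H^∞ ⪰ K^{∘2l}/(2π(2l−1)²). -/
/-!
Since `arccos = π/2 - arcsin`, the ReLU kernel is `H = K/4 + (K ⊙ arcsin K)/(2π)`, and
`t · arcsin t = ∑ aₖ t^(2k+2)` on `[-1, 1]`, with `aₖ = C(2k,k) / (4^k (2k+1)) ≥ 1/(2k+1)²`.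
Every Hadamard power of the Gram matrix `K` is positive semidefinite by the Schur product
theorem, so `K ⊙ arcsin K` is a nonnegative combination of positive semidefinite matrices;
discarding all of it, or all terms but the one with `2k+2 = 2l`, gives the two bounds.
-/

open Real Set Filter Topology MeasureTheory

/-- `invSqrtCoeff k = C(2k,k) / 4^k`, the `k`-th Taylor coefficient of `(1 - y)^(-1/2)`. -/
noncomputable def invSqrtCoeff : ℕ → ℝ
  | 0 => 1
  | k + 1 => invSqrtCoeff k * (2 * k + 1) / (2 * k + 2)

lemma invSqrtCoeff_pos (k : ℕ) : 0 < invSqrtCoeff k := by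
  induction k with
  | zero => exact one_pos
  | succ k ih => rw [invSqrtCoeff]; positivity

lemma one_le_two_mul_add_one_mul_invSqrtCoeff (k : ℕ) : 1 ≤ (2 * k + 1) * invSqrtCoeff k := by
  induction k with
  | zero => simp [invSqrtCoeff]
  | succ k ih =>
    rw [invSqrtCoeff, ← mul_div_assoc, le_div_iff₀ (by positivity)]
    push_cast
    nlinarith [invSqrtCoeff_pos k]

lemma Ring.multichoose_one_half_eq_invSqrtCoeff (k : ℕ) :
    Ring.multichoose (1 / 2 : ℝ) k = invSqrtCoeff k := by
  induction k with
  | zero => simp [invSqrtCoeff]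
  | succ k ih =>
    have hk := factorial_nsmul_multichoose_eq_ascPochhammer (1 / 2 : ℝ) k
    have hk1 := factorial_nsmul_multichoose_eq_ascPochhammer (1 / 2 : ℝ) (k + 1)
    rw [Polynomial.ascPochhammer_smeval_eq_eval] at hk hk1
    rw [ascPochhammer_succ_eval, ← hk, ih, nsmul_eq_mul, nsmul_eq_mul, Nat.factorial_succ,
      Nat.cast_mul] at hk1
    rw [invSqrtCoeff, eq_div_iff (by positivity)]
    apply mul_left_cancel₀ (Nat.cast_ne_zero.2 k.factorial_ne_zero)
    push_cast at hk1
    linear_combination 2 * hk1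

lemma hasSum_invSqrtCoeff_mul_pow {y : ℝ} (hy : |y| < 1) :
    HasSum (fun k => invSqrtCoeff k * y ^ k) (1 / √(1 - y)) := by
  have := (one_div_one_sub_rpow_hasFPowerSeriesOnBall_zero (1 / 2)).hasSum (y := y)
    (by simpa [enorm_eq_nnnorm, ← NNReal.coe_lt_coe] using hy)
  simpa only [FormalMultilinearSeries.ofScalars_apply_eq, zero_add, smul_eq_mul,
    ← Ring.multichoose_eq, Ring.multichoose_one_half_eq_invSqrtCoeff, ← sqrt_eq_rpow] using this

noncomputable def arcsinCoeff (k : ℕ) : ℝ := invSqrtCoeff k / (2 * k + 1)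

lemma arcsinCoeff_pos (k : ℕ) : 0 < arcsinCoeff k :=
  div_pos (invSqrtCoeff_pos k) (by positivity)

lemma one_div_sq_le_arcsinCoeff (k : ℕ) : 1 / (2 * k + 1 : ℝ) ^ 2 ≤ arcsinCoeff k := by
  rw [arcsinCoeff, div_le_div_iff₀ (by positivity) (by positivity)]
  nlinarith [one_le_two_mul_add_one_mul_invSqrtCoeff k]

namespace Real

/-- Integrate `1/√(1-t²) = ∑ invSqrtCoeff k * t^(2k)` term by term from `0` to `x`. -/
lemma hasSum_arcsinCoeff_mul_pow_of_abs_lt {x : ℝ} (hx : |x| < 1) :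
    HasSum (fun k => arcsinCoeff k * x ^ (2 * k + 1)) (arcsin x) := by
  have hsq : ∀ t ∈ uIcc 0 x, t ^ 2 ≤ x ^ 2 := fun t ht =>
    sq_le_sq.mpr (by simpa using abs_sub_left_of_mem_uIcc ht)
  have hsq_lt : ∀ t ∈ uIcc 0 x, |t ^ 2| < 1 := fun t ht => by
    rw [abs_of_nonneg (sq_nonneg t)]
    exact (hsq t ht).trans_lt ((sq_lt_one_iff_abs_lt_one x).mpr hx)
  have hFTC : ∫ t in (0)..x, 1 / √(1 - t ^ 2) = arcsin x := by
    have hne : ∀ t ∈ uIcc 0 x, t ≠ -1 ∧ t ≠ 1 := fun t ht => by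
      have := hsq_lt t ht
      constructor <;> rintro rfl <;> norm_num at this
    have hint : IntervalIntegrable (fun t => 1 / √(1 - t ^ 2)) volume 0 x :=
      ContinuousOn.intervalIntegrable <| continuousOn_const.div (by fun_prop) fun t ht =>
        (sqrt_pos.2 (by linarith [abs_lt.mp (hsq_lt t ht)])).ne'
    rw [intervalIntegral.integral_eq_sub_of_hasDerivAt
      (fun t ht => hasDerivAt_arcsin (hne t ht).1 (hne t ht).2) hint, arcsin_zero, sub_zero]
  have hterm : ∀ k, ∫ t in (0)..x, invSqrtCoeff k * t ^ (2 * k) =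
      arcsinCoeff k * x ^ (2 * k + 1) := fun k => by
    rw [intervalIntegral.integral_const_mul, integral_pow, arcsinCoeff,
      zero_pow (Nat.succ_ne_zero _), sub_zero]
    push_cast
    ring
  rw [← hFTC, ← funext hterm]
  refine intervalIntegral.hasSum_integral_of_dominated_convergence
    (fun k _ => invSqrtCoeff k * (x ^ 2) ^ k) (fun k => by fun_prop)
    (fun k => ae_of_all _ fun t ht => ?_)
    (ae_of_all _ fun _ _ => (hasSum_invSqrtCoeff_mul_pow (hsq_lt x right_mem_uIcc)).summable)
    intervalIntegrable_const
    (ae_of_all _ fun t ht => ?_)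
  · rw [pow_mul, norm_mul, norm_pow, Real.norm_of_nonneg (invSqrtCoeff_pos k).le,
      Real.norm_of_nonneg (sq_nonneg t)]
    exact mul_le_mul_of_nonneg_left
      (pow_le_pow_left₀ (sq_nonneg t) (hsq t (uIoc_subset_uIcc ht)) k) (invSqrtCoeff_pos k).le
  · simpa only [pow_mul] using hasSum_invSqrtCoeff_mul_pow (hsq_lt t (uIoc_subset_uIcc ht))

/-- Each partial sum is the limit as `x → 1⁻` of a partial sum of the series of
`arcsin x ≤ π / 2`. -/
lemma summable_arcsinCoeff : Summable arcsinCoeff := by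
  refine summable_of_sum_range_le (c := π / 2) (fun k => (arcsinCoeff_pos k).le) fun n => ?_
  have hcont : Continuous fun x : ℝ => ∑ k ∈ Finset.range n, arcsinCoeff k * x ^ (2 * k + 1) := by
    fun_prop
  have hpoly : Tendsto (fun x : ℝ => ∑ k ∈ Finset.range n, arcsinCoeff k * x ^ (2 * k + 1))
      (𝓝[<] 1) (𝓝 (∑ k ∈ Finset.range n, arcsinCoeff k)) := by
    simpa using (hcont.tendsto 1).mono_left nhdsWithin_le_nhds
  refine le_of_tendsto hpoly ?_
  filter_upwards [Ioo_mem_nhdsLT (zero_lt_one' ℝ)] with x hx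
  calc ∑ k ∈ Finset.range n, arcsinCoeff k * x ^ (2 * k + 1) ≤ arcsin x :=
        sum_le_hasSum _ (fun k _ => mul_nonneg (arcsinCoeff_pos k).le (pow_nonneg hx.1.le _))
          (hasSum_arcsinCoeff_mul_pow_of_abs_lt (abs_lt.2 ⟨by linarith [hx.1], hx.2⟩))
    _ ≤ π / 2 := arcsin_le_pi_div_two x

lemma hasSum_arcsinCoeff_mul_pow {x : ℝ} (hx : |x| ≤ 1) :
    HasSum (fun k => arcsinCoeff k * x ^ (2 * k + 1)) (arcsin x) := by
  have hbound : ∀ k, ∀ y ∈ Icc (-1 : ℝ) 1,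
      ‖arcsinCoeff k * y ^ (2 * k + 1)‖ ≤ arcsinCoeff k := fun k y hy => by
    rw [norm_mul, norm_pow, Real.norm_of_nonneg (arcsinCoeff_pos k).le]
    exact mul_le_of_le_one_right (arcsinCoeff_pos k).le
      (pow_le_one₀ (norm_nonneg y) (abs_le.2 hy))
  have hcont : ContinuousOn (fun y => ∑' k, arcsinCoeff k * y ^ (2 * k + 1)) (Icc (-1) 1) :=
    continuousOn_tsum (fun k => by fun_prop) summable_arcsinCoeff hbound
  have heq : EqOn arcsin (fun y => ∑' k, arcsinCoeff k * y ^ (2 * k + 1)) (Icc (-1) 1) :=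
    EqOn.of_subset_closure (s := Ioo (-1) 1)
      (fun y hy => (hasSum_arcsinCoeff_mul_pow_of_abs_lt (abs_lt.2 hy)).tsum_eq.symm)
      continuous_arcsin.continuousOn hcont Ioo_subset_Icc_self
      (by rw [closure_Ioo (by norm_num)])
  rw [heq (abs_le.1 hx)]
  exact (summable_arcsinCoeff.of_norm_bounded fun k => hbound k x (abs_le.1 hx)).hasSum

end Real

namespace Matrix

open scoped ComplexOrder

section RCLike

variable {ι 𝕜 : Type*} [Fintype ι] [RCLike 𝕜]

lemma PosSemidef.map_pow {A : Matrix ι ι 𝕜} (hA : A.PosSemidef) (m : ℕ) :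
    (A.map (· ^ m)).PosSemidef := by
  induction m with
  | zero =>
    convert posSemidef_vecMulVec_self_star (1 : ι → 𝕜)
    ext i j
    simp [vecMulVec]
  | succ m ih =>
    convert ih.hadamard hA using 1
    ext i j
    simp [pow_succ]

lemma PosSemidef.of_hasSum {β : Type*} {f : β → Matrix ι ι 𝕜} {A : Matrix ι ι 𝕜}
    (hf : ∀ k, (f k).PosSemidef) (hA : HasSum f A) : A.PosSemidef := by
  have hentry : ∀ i j, HasSum (fun k => f k i j) (A i j) := fun i j =>
    Pi.hasSum.1 (Pi.hasSum.1 hA i) j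
  rw [posSemidef_iff_dotProduct_mulVec]
  refine ⟨?_, fun v => ?_⟩
  · ext i j
    refine (hentry j i).star.unique ?_
    simpa only [← conjTranspose_apply, (hf _).isHermitian.eq] using hentry i j
  · have hquad : HasSum (fun k => star v ⬝ᵥ (f k *ᵥ v)) (star v ⬝ᵥ (A *ᵥ v)) := by
      simp only [dotProduct, mulVec, Finset.mul_sum]
      exact hasSum_sum fun i _ => hasSum_sum fun j _ => ((hentry i j).mul_right _).mul_left _
    exact hquad.nonneg fun k => (posSemidef_iff_dotProduct_mulVec.1 (hf k)).2 v

end RCLike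

variable {ι : Type*} {A : Matrix ι ι ℝ}

lemma hasSum_arcsinCoeff_smul_map_pow (hA : ∀ i j, |A i j| ≤ 1) :
    HasSum (fun k => arcsinCoeff k • A.map (· ^ (2 * k + 2))) (A ⊙ A.map arcsin) :=
  Pi.hasSum.2 fun i => Pi.hasSum.2 fun j => by
    simpa [pow_succ, mul_comm, mul_left_comm] using
      (hasSum_arcsinCoeff_mul_pow (hA i j)).mul_left (A i j)

lemma PosSemidef.hadamard_map_arcsin [Fintype ι] (hA : A.PosSemidef)
    (hA₁ : ∀ i j, |A i j| ≤ 1) : (A ⊙ A.map arcsin).PosSemidef :=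
  .of_hasSum (fun k => (hA.map_pow _).smul (arcsinCoeff_pos k).le)
    (hasSum_arcsinCoeff_smul_map_pow hA₁)

lemma PosSemidef.hadamard_map_arcsin_sub_map_pow [Fintype ι] (hA : A.PosSemidef)
    (hA₁ : ∀ i j, |A i j| ≤ 1) (l : ℕ) :
    (A ⊙ A.map arcsin - (1 / (2 * l + 1 : ℝ) ^ 2) • A.map (· ^ (2 * l + 2))).PosSemidef := by
  classical
  have hterms : ∀ k, (arcsinCoeff k • A.map (· ^ (2 * k + 2))).PosSemidef := fun k =>
    (hA.map_pow _).smul (arcsinCoeff_pos k).le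
  have hrest : (A ⊙ A.map arcsin - arcsinCoeff l • A.map (· ^ (2 * l + 2))).PosSemidef := by
    refine .of_hasSum (fun k => ?_) (by
      simpa [sub_eq_neg_add] using (hasSum_arcsinCoeff_smul_map_pow hA₁).update l 0)
    rcases eq_or_ne k l with rfl | hk
    · simpa using PosSemidef.zero
    · simpa [Function.update_of_ne hk] using hterms k
  convert hrest.add ((hA.map_pow (2 * l + 2)).smul
    (sub_nonneg.2 (one_div_sq_le_arcsinCoeff l))) using 1
  module

end Matrix

open Matrix

/-- For unit vectors with Gram matrix `K` and ReLU-kernel matrix `H^∞`,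
`H^∞ ⪰ K/4` and for every `l ≥ 1`, `H^∞ ⪰ K^{∘2l}/(2π(2l−1)²)`. -/
theorem stmt_5 (d n : ℕ) (x : Fin n → EuclideanSpace ℝ (Fin d))
    (hx : ∀ i, ‖x i‖ = 1)
    (K H : Matrix (Fin n) (Fin n) ℝ)
    (hK : ∀ i j, K i j = inner ℝ (x i) (x j))
    (hH : ∀ i j, H i j = K i j * (π - arccos (K i j)) / (2 * π)) :
    (H - (1 / 4 : ℝ) • K).PosSemidef ∧
      ∀ l : ℕ, 1 ≤ l →
        (H - (1 / (2 * π * (2 * (l : ℝ) - 1) ^ 2)) •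
            Matrix.of (fun i j => (K i j) ^ (2 * l))).PosSemidef := by
  have hKpsd : K.PosSemidef := (Matrix.ext hK : K = gram ℝ x) ▸ posSemidef_gram ℝ x
  have hK₁ : ∀ i j, |K i j| ≤ 1 := fun i j => by
    simpa [hK, hx] using abs_real_inner_le_norm (x i) (x j)
  have hH' : H = (1 / 4 : ℝ) • K + (2 * π)⁻¹ • (K ⊙ K.map arcsin) := by
    ext i j
    simp only [hH, arccos, Matrix.add_apply, Matrix.smul_apply, hadamard_apply, map_apply,
      smul_eq_mul]
    field_simp
    ring
  refine ⟨?_, fun l hl => ?_⟩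
  · rw [hH', add_sub_cancel_left]
    exact (hKpsd.hadamard_map_arcsin hK₁).smul (by positivity)
  · obtain ⟨m, rfl⟩ := Nat.exists_eq_add_of_le' hl
    convert (hKpsd.smul (by norm_num : (0 : ℝ) ≤ 1 / 4)).add
      ((hKpsd.hadamard_map_arcsin_sub_map_pow hK₁ m).smul
        (by positivity : 0 ≤ (2 * π)⁻¹)) using 1
    rw [hH']
    ext i j
    simp only [Matrix.add_apply, Matrix.sub_apply, Matrix.smul_apply, of_apply, map_apply,
      hadamard_apply, smul_eq_mul]
    rw [show 2 * ((m + 1 : ℕ) : ℝ) - 1 = 2 * m + 1 by push_cast; ring,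
      show 2 * (m + 1) = 2 * m + 2 by ring]
    field_simp
    ring
end
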